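/- arXiv:1109.5534 — 4 statements merged into one kernel-verified Lean document; each statement's English description precedes it below -/
import Mathlib

section
/- For a connected graph G, rc(G) = 2 if and only if src(G) = 2. -/
open SimpleGraph

def IsRainbowColoring {V : Type*} (G : SimpleGraph V) (c : Sym2 V → ℕ) : Prop :=
  ∀ u v : V, ∃ p : G.Walk u v, p.IsPath ∧ (p.edges.map c).Nodup

def IsStrongRainbowColoring {V : Type*} (G : SimpleGraph V) (c : Sym2 V → ℕ) : Prop :=
  ∀ u v : V, ∃ p : G.Walk u v, p.IsPath ∧ (p.edges.map c).Nodup ∧ p.length = G.dist u v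

noncomputable def rc {V : Type*} (G : SimpleGraph V) : ℕ :=
  sInf {k | ∃ c : Sym2 V → ℕ, (∀ e ∈ G.edgeSet, c e < k) ∧ IsRainbowColoring G c}

noncomputable def src {V : Type*} (G : SimpleGraph V) : ℕ :=
  sInf {k | ∃ c : Sym2 V → ℕ, (∀ e ∈ G.edgeSet, c e < k) ∧ IsStrongRainbowColoring G c}

lemma nodup_lt_length_le {l : List ℕ} (hl : l.Nodup) (n : ℕ) (h : ∀ x ∈ l, x < n) :
    l.length ≤ n := by
  classical
  have h1 : l.toFinset ⊆ Finset.range n := by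
    intro x hx
    simp only [List.mem_toFinset] at hx
    exact Finset.mem_range.mpr (h x hx)
  have := Finset.card_le_card h1
  rwa [List.toFinset_card_of_nodup hl, Finset.card_range] at this

lemma rainbow_length_le {V : Type*} {G : SimpleGraph V} {c : Sym2 V → ℕ} {n : ℕ}
    (hc : ∀ e ∈ G.edgeSet, c e < n) {u v : V} (p : G.Walk u v)
    (hnd : (p.edges.map c).Nodup) : p.length ≤ n := by
  have : (p.edges.map c).length ≤ n := by
    apply nodup_lt_length_le hnd
    intro x hx
    obtain ⟨e, he, rfl⟩ := List.mem_map.mp hx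
    exact hc e (p.edges_subset_edgeSet he)
  simpa using this

theorem stmt4 {V : Type*} [Fintype V] (G : SimpleGraph V) (hG : G.Connected) :
    rc G = 2 ↔ src G = 2 := by
  classical
  set S : Set ℕ := {k | ∃ c : Sym2 V → ℕ, (∀ e ∈ G.edgeSet, c e < k) ∧ IsRainbowColoring G c}
  set T : Set ℕ := {k | ∃ c : Sym2 V → ℕ, (∀ e ∈ G.edgeSet, c e < k) ∧ IsStrongRainbowColoring G c}
  have hrc : rc G = sInf S := rfl
  have hsrc : src G = sInf T := rfl
  have hTS : T ⊆ S := by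
    rintro k ⟨c, hc, hstr⟩
    exact ⟨c, hc, fun u v => by
      obtain ⟨p, hp, hnd, _⟩ := hstr u v
      exact ⟨p, hp, hnd⟩⟩
  have hT : T.Nonempty := by
    obtain ⟨c, hcinj⟩ : ∃ c : Sym2 V → ℕ, Function.Injective c := by
      classical
      exact ⟨fun e => (Fintype.equivFin (Sym2 V) e : ℕ), fun a b hab => by
        have := Fin.val_injective hab
        exact (Fintype.equivFin (Sym2 V)).injective this⟩
    refine ⟨Fintype.card (Sym2 V) + (⨆ e : Sym2 V, c e) + 1, c, fun e he => ?_, fun u v => ?_⟩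
    · have : c e ≤ ⨆ e : Sym2 V, c e := by
        classical
        exact le_ciSup (Set.Finite.bddAbove (Set.finite_range c)) e
      omega
    · obtain ⟨p, hp⟩ := (hG u v).exists_walk_length_eq_dist
      have hpath : p.IsPath := p.isPath_of_length_eq_dist hp
      exact ⟨p, hpath, hpath.edges_nodup.map hcinj, hp⟩
  have hrs : rc G ≤ src G := by
    rw [hrc, hsrc]
    exact Nat.sInf_le (hTS (Nat.sInf_mem hT))
  -- key: a rainbow coloring with colors < 2 is a strong rainbow coloring
  have key2 : ∀ c : Sym2 V → ℕ, (∀ e ∈ G.edgeSet, c e < 2) → IsRainbowColoring G c →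
      IsStrongRainbowColoring G c := by
    intro c hc hr u v
    by_cases huv : u = v
    · subst huv
      exact ⟨Walk.nil, Walk.IsPath.nil, by simp, by simp [(hG.dist_eq_zero_iff).mpr rfl]⟩
    by_cases hadj : G.Adj u v
    · refine ⟨Walk.cons hadj Walk.nil, ?_, by simp, ?_⟩
      · simp [Walk.isPath_def, huv]
      · simp [(G.dist_eq_one_iff_adj).mpr hadj]
    · obtain ⟨p, hp, hnd⟩ := hr u v
      have hlen : p.length ≤ 2 := rainbow_length_le hc p hnd
      have hd : G.dist u v ≤ p.length := G.dist_le p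
      have hd2 : 2 ≤ G.dist u v := by
        have h0 : 0 < G.dist u v := hG.pos_dist_of_ne huv
        have h1 : G.dist u v ≠ 1 := fun hh => hadj (SimpleGraph.dist_eq_one_iff_adj.mp hh)
        omega
      exact ⟨p, hp, hnd, by omega⟩
  -- a rainbow coloring with colors < 1 is strong too
  have key1 : ∀ c : Sym2 V → ℕ, (∀ e ∈ G.edgeSet, c e < 1) → IsRainbowColoring G c →
      IsStrongRainbowColoring G c := by
    intro c hc hr u v
    obtain ⟨p, hp, hnd⟩ := hr u v
    have hlen : p.length ≤ 1 := rainbow_length_le hc p hnd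
    have hd : G.dist u v ≤ p.length := G.dist_le p
    refine ⟨p, hp, hnd, ?_⟩
    have hcases : p.length = 0 ∨ p.length = 1 := by omega
    rcases hcases with h | h
    · -- length 0: u = v
      have : u = v := p.eq_of_length_eq_zero h
      subst this
      rw [h, SimpleGraph.dist_self]
    · -- length 1: adjacent
      have hne : u ≠ v := by
        intro huv
        subst huv
        rw [(SimpleGraph.Walk.isPath_iff_eq_nil).mp hp] at h
        simp at h
      have h0 : 0 < G.dist u v := hG.pos_dist_of_ne hne
      omega
  constructor
  · intro h
    have hS : S.Nonempty := by
      by_contra hE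
      rw [Set.not_nonempty_iff_eq_empty] at hE
      rw [hrc, hE, Nat.sInf_empty] at h
      omega
    have hm : rc G ∈ S := hrc ▸ Nat.sInf_mem hS
    rw [h] at hm
    obtain ⟨c, hc, hr⟩ := hm
    have : (2 : ℕ) ∈ T := ⟨c, hc, key2 c hc hr⟩
    have hle : src G ≤ 2 := hsrc ▸ Nat.sInf_le this
    omega
  · intro h
    have hle : rc G ≤ 2 := by omega
    rcases Nat.lt_or_ge (rc G) 2 with hlt | hge
    · exfalso
      have hS : S.Nonempty := hT.mono hTS
      have hm : rc G ∈ S := hrc ▸ Nat.sInf_mem hS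
      obtain ⟨c, hc, hr⟩ := hm
      have hc1 : ∀ e ∈ G.edgeSet, c e < 1 := by
        intro e he
        have := hc e he
        omega
      have : rc G ∈ T := ⟨c, fun e he => hc e he, key1 c hc1 hr⟩
      have : src G ≤ rc G := hsrc ▸ Nat.sInf_le this
      omega
    · omega
end

section
/- A connected graph G on n vertices satisfies rc(G) = n − 1 if and only if G is a tree. -/
open SimpleGraph

section Aux

variable {V : Type*}

lemma reach_del {G : SimpleGraph V} {u v : V}
    (h : (G \ fromEdgeSet {s(u,v)}).Reachable u v) :
    ∀ {x y : V}, G.Walk x y → (G \ fromEdgeSet {s(u,v)}).Reachable x y := by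
  intro x y p
  induction p with
  | nil => exact Reachable.refl _
  | cons ha q ih =>
    rename_i a b yy
    refine Reachable.trans ?_ ih
    by_cases he : s(a,b) = s(u,v)
    · rw [Sym2.eq_iff] at he
      rcases he with ⟨rfl, rfl⟩ | ⟨rfl, rfl⟩
      · exact h
      · exact h.symm
    · exact Adj.reachable (by simp [ha, he])

lemma exists_tree_le [Fintype V] : ∀ (n : ℕ) (G : SimpleGraph V), G.edgeSet.ncard = n →
    G.Connected → ∃ T ≤ G, T.IsTree := by
  intro n
  induction n using Nat.strong_induction_on with
  | _ n ih =>
    intro G hn hG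
    by_cases hac : G.IsAcyclic
    · exact ⟨G, le_refl _, hG, hac⟩
    · rw [isAcyclic_iff_forall_edge_isBridge] at hac
      push_neg at hac
      obtain ⟨e, he, hnb⟩ := hac
      induction e using Sym2.ind with
      | _ u v =>
      rw [isBridge_iff] at hnb
      push_neg at hnb
      have hr : (G \ fromEdgeSet {s(u,v)}).Reachable u v := hnb
      have hconn : (G \ fromEdgeSet {s(u,v)}).Connected := by
        rw [connected_iff]
        exact ⟨fun x y => reach_del hr ((hG.preconnected x y).some), hG.nonempty⟩
      have hle : (G \ fromEdgeSet {s(u,v)}) ≤ G := sdiff_le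
      have hcard : (G \ fromEdgeSet {s(u,v)}).edgeSet.ncard < n := by
        have hes : (G \ fromEdgeSet {s(u,v)}).edgeSet = G.edgeSet \ {s(u,v)} := by
          rw [edgeSet_sdiff, edgeSet_fromEdgeSet]
          ext f
          simp only [Set.mem_diff, Set.mem_singleton_iff, Set.mem_setOf_eq]
          constructor
          · rintro ⟨hf, hf2⟩
            refine ⟨hf, fun hh => hf2 ⟨hh, fun hd => ?_⟩⟩
            rw [hh] at hf
            exact (G.not_isDiag_of_mem_edgeSet hf) (hh ▸ hd)
          · rintro ⟨hf, hf2⟩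
            exact ⟨hf, fun hh => hf2 hh.1⟩
        rw [hes, ← hn]
        have hfin : G.edgeSet.Finite := Set.toFinite _
        exact Set.ncard_diff_singleton_lt_of_mem he hfin
      obtain ⟨T, hT1, hT2⟩ := ih _ hcard _ rfl hconn
      exact ⟨T, hT1.trans hle, hT2⟩

lemma extend_path [DecidableEq V] {T : SimpleGraph V} (hT : T.IsAcyclic) {x y u : V}
    (h : T.Adj x y) {p : T.Walk x u} (hp : p.IsPath) :
    ∃ (w : V) (q : T.Walk w u), q.IsPath ∧ s(x,y) ∈ q.edges ∧ ∀ e ∈ p.edges, e ∈ q.edges := by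
  by_cases hy : y ∈ p.support
  · refine ⟨x, p, hp, ?_, fun e he => he⟩
    have h1 : (p.takeUntil y hy).IsPath := hp.takeUntil hy
    have h2 : (Walk.cons h Walk.nil : T.Walk x y).IsPath := by
      simp [Walk.isPath_def, h.ne]
    have := hT.path_unique ⟨p.takeUntil y hy, h1⟩ ⟨Walk.cons h Walk.nil, h2⟩
    have heq : p.takeUntil y hy = Walk.cons h Walk.nil := congrArg Subtype.val this
    have : s(x,y) ∈ (p.takeUntil y hy).edges := by rw [heq]; simp
    exact p.edges_takeUntil_subset hy this
  · refine ⟨y, Walk.cons h.symm p, hp.cons hy, ?_, fun e he => by simp [he]⟩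
    simp [Sym2.eq_swap]

lemma tree_inj [DecidableEq V] {T : SimpleGraph V} (hT : T.IsTree) {c : Sym2 V → ℕ}
    (hc : IsRainbowColoring T c) : Set.InjOn c T.edgeSet := by
  intro e1 he1 e2 he2 hceq
  by_contra hne
  induction e1 using Sym2.ind with | _ a b =>
  induction e2 using Sym2.ind with | _ x y =>
  rw [mem_edgeSet] at he1 he2
  obtain ⟨p0w⟩ := hT.isConnected.preconnected a x
  obtain ⟨w1, q1, hq1, hq1e, hq1s⟩ := extend_path hT.IsAcyclic he1 p0w.toPath.2
  obtain ⟨w2, q2, hq2, hq2e, hq2s⟩ := extend_path hT.IsAcyclic he2 hq1.reverse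
  have hab : s(a,b) ∈ q2.edges := by
    apply hq2s
    rw [Walk.edges_reverse, List.mem_reverse]
    exact hq1e
  obtain ⟨p, hp, hpn⟩ := hc w2 w1
  have : p = q2 := congrArg Subtype.val (hT.IsAcyclic.path_unique ⟨p, hp⟩ ⟨q2, hq2⟩)
  subst this
  exact hne (List.inj_on_of_nodup_map hpn hab hq2e hceq)

lemma tree_rc [Fintype V] [Nontrivial V] {G : SimpleGraph V} (hG : G.IsTree) :
    rc G = Fintype.card V - 1 := by
  classical
  letI : Fintype G.edgeSet := (G.edgeSet.toFinite).fintype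
  have hcard : G.edgeFinset.card = Fintype.card V - 1 := by
    have := hG.card_edgeFinset
    omega
  have hn2 : 2 ≤ Fintype.card V := Fintype.one_lt_card
  have hcard' : Fintype.card G.edgeFinset = Fintype.card V - 1 := by
    rw [Fintype.card_coe]; exact hcard
  let eqv : G.edgeFinset ≃ Fin (Fintype.card V - 1) := Fintype.equivFinOfCardEq hcard'
  let c : Sym2 V → ℕ := fun x => if h : x ∈ G.edgeFinset then (eqv ⟨x, h⟩ : ℕ) else 0
  have hmem : (Fintype.card V - 1) ∈
      {k | ∃ c : Sym2 V → ℕ, (∀ e ∈ G.edgeSet, c e < k) ∧ IsRainbowColoring G c} := by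
    refine ⟨c, fun e he => ?_, fun u v => ?_⟩
    · have he' : e ∈ G.edgeFinset := by rwa [mem_edgeFinset]
      simp only [c, dif_pos he']
      exact (eqv ⟨e, he'⟩).isLt
    · obtain ⟨w⟩ := hG.isConnected.preconnected u v
      refine ⟨w.toPath, w.toPath.2, ?_⟩
      apply List.Nodup.map_on ?_ w.toPath.2.isTrail.edges_nodup
      intro a ha b hb hab
      have ha' : a ∈ G.edgeFinset := by
        rw [mem_edgeFinset]; exact (w.toPath : G.Walk u v).edges_subset_edgeSet ha
      have hb' : b ∈ G.edgeFinset := by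
        rw [mem_edgeFinset]; exact (w.toPath : G.Walk u v).edges_subset_edgeSet hb
      simp only [c, dif_pos ha', dif_pos hb'] at hab
      have h2 : eqv ⟨a, ha'⟩ = eqv ⟨b, hb'⟩ := Fin.val_injective hab
      have h3 := eqv.injective h2
      exact congrArg Subtype.val h3
  refine le_antisymm (Nat.sInf_le hmem) ?_
  have hne : {k | ∃ c : Sym2 V → ℕ,
      (∀ e ∈ G.edgeSet, c e < k) ∧ IsRainbowColoring G c}.Nonempty := ⟨_, hmem⟩
  obtain ⟨c', hc'b, hc'r⟩ := Nat.sInf_mem hne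
  have hinj := tree_inj hG hc'r
  calc Fintype.card V - 1 = G.edgeFinset.card := hcard.symm
    _ = (G.edgeFinset.image c').card := by
        rw [Finset.card_image_of_injOn]
        intro a ha b hb
        exact hinj (by rwa [← mem_edgeFinset]) (by rwa [← mem_edgeFinset])
    _ ≤ (Finset.range (rc G)).card := by
        apply Finset.card_le_card
        intro k hk
        simp only [Finset.mem_image] at hk
        obtain ⟨e, he, rfl⟩ := hk
        rw [Finset.mem_range]
        exact hc'b e (by rwa [← mem_edgeFinset])
    _ = rc G := Finset.card_range _

lemma ord_lemma [DecidableEq V] {T : SimpleGraph V} (hT : T.IsAcyclic) {x y u v : V}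
    {p : T.Walk x y} (hp : p.IsPath) (hu : u ∈ p.support) (hv : v ∈ p.support) :
    v ∈ (p.dropUntil u hu).support ∨ u ∈ (p.dropUntil v hv).support := by
  have hsplit : v ∈ (p.takeUntil u hu).support ∨ v ∈ (p.dropUntil u hu).support := by
    rw [← Walk.mem_support_append_iff, Walk.take_spec]
    exact hv
  rcases hsplit with hvq | hvd
  · right
    set q := p.takeUntil u hu with hqdef
    set d := p.dropUntil u hu with hddef
    have hq : q.IsPath := hp.takeUntil hu
    have hd : d.IsPath := hp.dropUntil hu
    set r := q.dropUntil v hvq with hrdef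
    have hr : r.IsPath := hq.dropUntil hvq
    have hps : p.support = q.support ++ d.support.tail := by
      rw [← Walk.support_append, Walk.take_spec]
    have hpn : (q.support ++ d.support.tail).Nodup := by
      rw [← hps]; exact hp.support_nodup
    have hrd : (r.append d).IsPath := by
      rw [Walk.isPath_def, Walk.support_append]
      rw [List.nodup_append] at hpn ⊢
      refine ⟨hr.support_nodup, hpn.2.1, fun a ha ha' => ?_⟩
      exact fun hb => hpn.2.2 a (Walk.support_dropUntil_subset q hvq ha) ha' hb
    have huniq : p.dropUntil v hv = r.append d :=
      congrArg Subtype.val (hT.path_unique ⟨p.dropUntil v hv, hp.dropUntil hv⟩ ⟨r.append d, hrd⟩)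
    rw [huniq, Walk.mem_support_append_iff]
    exact Or.inl r.end_mem_support
  · left; exact hvd

lemma reroute [DecidableEq V] {G T : SimpleGraph V} (hle : T ≤ G) (hT : T.IsAcyclic)
    {u v : V} (huv : G.Adj u v) (hnotT : s(u,v) ∉ T.edgeSet)
    {P : T.Walk u v} (hP : P.IsPath) {c : Sym2 V → ℕ}
    (hinj : ∀ a ∈ T.edgeSet, ∀ b ∈ T.edgeSet, a ∉ P.edges → b ∉ P.edges → c a = c b → a = b)
    (hce : ∀ a ∈ T.edgeSet, a ∉ P.edges → c a ≠ c s(u,v))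
    {x y : V} {Q : T.Walk x y} (hQ : Q.IsPath)
    (hu : u ∈ Q.support) (hv : v ∈ (Q.dropUntil u hu).support) :
    ∃ p : G.Walk x y, p.IsPath ∧ (p.edges.map c).Nodup := by
  set A := Q.takeUntil u hu with hAdef
  set D := Q.dropUntil u hu with hDdef
  set S := D.takeUntil v hv with hSdef
  set B := D.dropUntil v hv with hBdef
  have hA : A.IsPath := hQ.takeUntil hu
  have hD : D.IsPath := hQ.dropUntil hu
  have hS : S.IsPath := hD.takeUntil hv
  have hB : B.IsPath := hD.dropUntil hv
  have hSP : S = P := congrArg Subtype.val (hT.path_unique ⟨S, hS⟩ ⟨P, hP⟩)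
  have hDs : D.support = S.support ++ B.support.tail := by
    rw [← Walk.support_append, Walk.take_spec]
  have hDe : D.edges = S.edges ++ B.edges := by
    rw [← Walk.edges_append, Walk.take_spec]
  have hDt : D.support.tail = S.support.tail ++ B.support.tail := by
    rw [hDs, Walk.support_eq_cons (p := S)]; simp
  have hQs : Q.support = A.support ++ (S.support.tail ++ B.support.tail) := by
    rw [← hDt, ← Walk.support_append, Walk.take_spec]
  have hQe : Q.edges = A.edges ++ (S.edges ++ B.edges) := by
    rw [← hDe, ← Walk.edges_append, Walk.take_spec]
  have hsn : (A.support ++ (S.support.tail ++ B.support.tail)).Nodup := by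
    rw [← hQs]; exact hQ.support_nodup
  have hen : (A.edges ++ (S.edges ++ B.edges)).Nodup := by
    rw [← hQe]; exact Walk.edges_nodup_of_support_nodup hQ.support_nodup
  have hvS : v ∈ S.support.tail := by
    have h1 : v ∈ S.support := S.end_mem_support
    rw [Walk.support_eq_cons, List.mem_cons] at h1
    rcases h1 with h1 | h1
    · exact absurd h1.symm huv.ne
    · exact h1
  have hAT : ∀ e ∈ A.edges, e ∈ T.edgeSet := fun e he => A.edges_subset_edgeSet he
  have hBT : ∀ e ∈ B.edges, e ∈ T.edgeSet := fun e he => B.edges_subset_edgeSet he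
  have hTG : T.edgeSet ⊆ G.edgeSet := edgeSet_mono hle
  have hAG : ∀ e ∈ A.edges, e ∈ G.edgeSet := fun e he => hTG (hAT e he)
  have hBG : ∀ e ∈ B.edges, e ∈ G.edgeSet := fun e he => hTG (hBT e he)
  rw [List.nodup_append] at hsn hen
  obtain ⟨hsnA, hsnSB, hsdisj⟩ := hsn
  obtain ⟨henA, henSB, hedisj⟩ := hen
  rw [List.nodup_append] at hsnSB henSB
  refine ⟨(A.transfer G hAG).append (Walk.cons huv (B.transfer G hBG)), ?_, ?_⟩
  · rw [Walk.isPath_def, Walk.support_append, Walk.support_cons, List.tail_cons,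
      Walk.support_transfer, Walk.support_transfer]
    rw [List.nodup_append]
    refine ⟨hsnA, ?_, ?_⟩
    · rw [Walk.support_eq_cons (p := B), List.nodup_cons]
      exact ⟨fun hc => hsnSB.2.2 v hvS v hc rfl, hsnSB.2.1⟩
    · intro a ha b ha'
      rw [Walk.support_eq_cons (p := B), List.mem_cons] at ha'
      rcases ha' with rfl | ha'
      · exact hsdisj a ha _ (List.mem_append_left _ hvS)
      · exact hsdisj a ha _ (List.mem_append_right _ ha')
  · rw [Walk.edges_append, Walk.edges_cons, Walk.edges_transfer, Walk.edges_transfer]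
    have hmem : ∀ a ∈ A.edges ++ s(u,v) :: B.edges,
        a = s(u,v) ∨ (a ∈ T.edgeSet ∧ a ∉ P.edges) := by
      intro a ha
      rw [List.mem_append, List.mem_cons] at ha
      rcases ha with ha | rfl | ha
      · exact Or.inr ⟨hAT a ha, fun hc => hedisj a ha a (List.mem_append_left _ (hSP ▸ hc)) rfl⟩
      · exact Or.inl rfl
      · exact Or.inr ⟨hBT a ha, fun hc => henSB.2.2 a (hSP ▸ hc) a ha rfl⟩
    apply List.Nodup.map_on
    · intro a ha b hb hab
      rcases hmem a ha with rfl | ⟨haT, haP⟩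
      · rcases hmem b hb with rfl | ⟨hbT, hbP⟩
        · rfl
        · exact absurd hab.symm (hce b hbT hbP)
      · rcases hmem b hb with rfl | ⟨hbT, hbP⟩
        · exact absurd hab (hce a haT haP)
        · exact hinj a haT b hbT haP hbP hab
    · rw [List.nodup_append, List.nodup_cons]
      have hsB : s(u,v) ∉ B.edges := fun hc => hnotT (hBT _ hc)
      have hsA : s(u,v) ∉ A.edges := fun hc => hnotT (hAT _ hc)
      refine ⟨henA, ⟨hsB, henSB.2.1⟩, ?_⟩
      intro a ha b ha'
      rw [List.mem_cons] at ha'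
      rcases ha' with rfl | ha'
      · rintro rfl; exact hsA ha
      · exact hedisj a ha _ (List.mem_append_right _ ha')

lemma first_edge {T : SimpleGraph V} {u v : V} (p : T.Walk u v) (h : u ≠ v) :
    ∃ w, T.Adj u w ∧ s(u,w) ∈ p.edges := by
  cases p with
  | nil => exact absurd rfl h
  | cons ha q => exact ⟨_, ha, by simp⟩

lemma nontree_mem [Fintype V] {G : SimpleGraph V} (hG : G.Connected) (hnt : ¬ G.IsTree) :
    ∃ c : Sym2 V → ℕ, (∀ e ∈ G.edgeSet, c e < Fintype.card V - 2) ∧ IsRainbowColoring G c := by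
  classical
  obtain ⟨T, hle, hTtree⟩ := exists_tree_le _ G rfl hG
  have hTacyc : T.IsAcyclic := hTtree.IsAcyclic
  obtain ⟨e0, he0G, he0T⟩ : ∃ e ∈ G.edgeSet, e ∉ T.edgeSet := by
    by_contra hc
    push_neg at hc
    have : G ≤ T := edgeSet_subset_edgeSet.mp hc
    exact hnt (le_antisymm this hle ▸ hTtree)
  induction e0 using Sym2.ind with | _ u v =>
  have hGuv : G.Adj u v := he0G
  have hune : u ≠ v := hGuv.ne
  obtain ⟨Pw0⟩ := hTtree.isConnected.preconnected u v
  obtain ⟨Pw, hPpath⟩ : ∃ p : T.Walk u v, p.IsPath := ⟨Pw0.toPath, Pw0.toPath.2⟩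
  obtain ⟨w1, hw1adj, hf1P⟩ := first_edge Pw hune
  obtain ⟨w2, hw2adj, hf2P'⟩ := first_edge Pw.reverse hune.symm
  have hf2P : s(v,w2) ∈ Pw.edges := by
    rwa [Walk.edges_reverse, List.mem_reverse] at hf2P'
  set f1 := s(u,w1) with hf1def
  set f2 := s(v,w2) with hf2def
  have hf1T : f1 ∈ T.edgeSet := hw1adj
  have hf2T : f2 ∈ T.edgeSet := hw2adj
  have hne12 : f1 ≠ f2 := by
    intro h
    rw [hf1def, hf2def, Sym2.eq_iff] at h
    rcases h with ⟨h1, h2⟩ | ⟨h1, h2⟩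
    · exact hune h1
    · apply he0T
      rw [hf1def] at hf1T
      rwa [h2] at hf1T
  -- card V ≥ 3
  have hn3 : 3 ≤ Fintype.card V := by
    have hlen : 2 ≤ Pw.edges.length := by
      rcases hPe : Pw.edges with _ | ⟨a, _ | ⟨b, l⟩⟩
      · rw [hPe] at hf1P; simp at hf1P
      · rw [hPe] at hf1P hf2P
        simp only [List.mem_singleton] at hf1P hf2P
        exact absurd (hf1P.trans hf2P.symm) hne12
      · simp
    have := hPpath.length_lt
    rw [← Walk.length_edges] at this
    omega
  letI : Fintype T.edgeSet := (T.edgeSet.toFinite).fintype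
  have hTcard : T.edgeFinset.card = Fintype.card V - 1 := by
    have := hTtree.card_edgeFinset
    omega
  have hcard' : Fintype.card T.edgeFinset = Fintype.card V - 1 := by
    rw [Fintype.card_coe]; exact hTcard
  let eqv0 : T.edgeFinset ≃ Fin (Fintype.card V - 1) := Fintype.equivFinOfCardEq hcard'
  have hf2mem : f2 ∈ T.edgeFinset := by rwa [mem_edgeFinset]
  have hf1mem : f1 ∈ T.edgeFinset := by rwa [mem_edgeFinset]
  let last : Fin (Fintype.card V - 1) := ⟨Fintype.card V - 2, by omega⟩
  let sw : Fin (Fintype.card V - 1) ≃ Fin (Fintype.card V - 1) :=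
    Equiv.swap (eqv0 ⟨f2, hf2mem⟩) last
  let g : Sym2 V → ℕ := fun x => if h : x ∈ T.edgeFinset then (sw (eqv0 ⟨x, h⟩) : ℕ) else 0
  have ginj : ∀ a, a ∈ T.edgeFinset → ∀ b, b ∈ T.edgeFinset → g a = g b → a = b := by
    intro a ha b hb hab
    simp only [g, dif_pos ha, dif_pos hb] at hab
    have h2 := eqv0.injective (sw.injective (Fin.val_injective hab))
    exact congrArg Subtype.val h2
  have gmax : ∀ a (h : a ∈ T.edgeFinset), g a = Fintype.card V - 2 → a = f2 := by
    intro a ha hga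
    simp only [g, dif_pos ha] at hga
    have h1 : sw (eqv0 ⟨a, ha⟩) = last := Fin.val_injective hga
    have h2 : eqv0 ⟨a, ha⟩ = eqv0 ⟨f2, hf2mem⟩ := by
      have := sw.injective (a₁ := eqv0 ⟨a, ha⟩) (a₂ := eqv0 ⟨f2, hf2mem⟩)
      apply this
      rw [h1]
      simp only [sw, Equiv.swap_apply_left]
    exact congrArg Subtype.val (eqv0.injective h2)
  have gle : ∀ a, a ∈ T.edgeFinset → g a ≤ Fintype.card V - 2 := by
    intro a ha
    simp only [g, dif_pos ha]
    have := (sw (eqv0 ⟨a, ha⟩)).isLt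
    omega
  have gf1lt : g f1 < Fintype.card V - 2 := by
    have h1 := gle f1 hf1mem
    rcases lt_or_eq_of_le h1 with h | h
    · exact h
    · exact absurd (gmax f1 hf1mem h) hne12
  set c : Sym2 V → ℕ := fun x => if x = s(u,v) ∨ x = f2 then g f1 else g x with hcdef
  have hcuv : c s(u,v) = g f1 := by simp [hcdef]
  have hcoff : ∀ a ∈ T.edgeSet, a ∉ Pw.edges → c a = g a := by
    intro a haT haP
    have h1 : a ≠ s(u,v) := fun h => he0T (h ▸ haT)
    have h2 : a ≠ f2 := fun h => haP (h ▸ hf2P)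
    simp [hcdef, h1, h2]
  refine ⟨c, ?_, ?_⟩
  · intro e he
    rw [hcdef]
    by_cases h : e = s(u,v) ∨ e = f2
    · simpa [h] using gf1lt
    · simp only [if_neg h]
      push_neg at h
      by_cases heT : e ∈ T.edgeFinset
      · rcases lt_or_eq_of_le (gle e heT) with h' | h'
        · exact h'
        · exact absurd (gmax e heT h') h.2
      · simp only [g, dif_neg heT]
        omega
  · intro x y
    obtain ⟨Qw0⟩ := hTtree.isConnected.preconnected x y
    obtain ⟨Qw, hQpath⟩ : ∃ q : T.Walk x y, q.IsPath := ⟨Qw0.toPath, Qw0.toPath.2⟩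
    by_cases hcase : f1 ∈ Qw.edges ∧ f2 ∈ Qw.edges
    · -- reroute through the edge s(u,v)
      have hu : u ∈ Qw.support := Qw.fst_mem_support_of_mem_edges hcase.1
      have hv : v ∈ Qw.support := Qw.fst_mem_support_of_mem_edges hcase.2
      have hinj' : ∀ a ∈ T.edgeSet, ∀ b ∈ T.edgeSet,
          a ∉ Pw.edges → b ∉ Pw.edges → c a = c b → a = b := by
        intro a haT b hbT haP hbP hab
        rw [hcoff a haT haP, hcoff b hbT hbP] at hab
        exact ginj a (by rwa [mem_edgeFinset]) b (by rwa [mem_edgeFinset]) hab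
      have hce' : ∀ a ∈ T.edgeSet, a ∉ Pw.edges → c a ≠ c s(u,v) := by
        intro a haT haP hc
        rw [hcoff a haT haP, hcuv] at hc
        have : a = f1 := ginj a (by rwa [mem_edgeFinset]) f1 hf1mem hc
        exact haP (this ▸ hf1P)
      rcases ord_lemma hTacyc hQpath hu hv with h | h
      · exact reroute hle hTacyc hGuv he0T hPpath hinj' hce' hQpath hu h
      · have he0T' : s(v,u) ∉ T.edgeSet := by rwa [Sym2.eq_swap]
        have hinj'' : ∀ a ∈ T.edgeSet, ∀ b ∈ T.edgeSet,
            a ∉ Pw.reverse.edges → b ∉ Pw.reverse.edges → c a = c b → a = b := by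
          intro a haT b hbT haP hbP
          rw [Walk.edges_reverse, List.mem_reverse] at haP hbP
          exact hinj' a haT b hbT haP hbP
        have hce'' : ∀ a ∈ T.edgeSet, a ∉ Pw.reverse.edges → c a ≠ c s(v,u) := by
          intro a haT haP
          rw [Walk.edges_reverse, List.mem_reverse] at haP
          rw [Sym2.eq_swap]
          exact hce' a haT haP
        exact reroute hle hTacyc hGuv.symm he0T' hPpath.reverse hinj'' hce'' hQpath hv h
    · -- the tree path itself is rainbow
      have hQG : ∀ e ∈ Qw.edges, e ∈ G.edgeSet :=
        fun e he => (edgeSet_mono hle) (Qw.edges_subset_edgeSet he)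
      refine ⟨Qw.transfer G hQG, hQpath.transfer hQG, ?_⟩
      rw [Walk.edges_transfer]
      apply List.Nodup.map_on ?_ (Walk.edges_nodup_of_support_nodup hQpath.support_nodup)
      intro a ha b hb hab
      have haT : a ∈ T.edgeSet := Qw.edges_subset_edgeSet ha
      have hbT : b ∈ T.edgeSet := Qw.edges_subset_edgeSet hb
      have hauv : a ≠ s(u,v) := fun h => he0T (h ▸ haT)
      have hbuv : b ≠ s(u,v) := fun h => he0T (h ▸ hbT)
      have hca : c a = if a = f2 then g f1 else g a := by simp [hcdef, hauv]
      have hcb : c b = if b = f2 then g f1 else g b := by simp [hcdef, hbuv]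
      rw [hca, hcb] at hab
      rw [not_and_or] at hcase
      by_cases ha2 : a = f2
      · by_cases hb2 : b = f2
        · rw [ha2, hb2]
        · rw [if_pos ha2, if_neg hb2] at hab
          have : b = f1 :=
            ginj b (by rwa [mem_edgeFinset]) f1 hf1mem hab.symm
          rcases hcase with hc1 | hc2
          · exact absurd (this ▸ hb) hc1
          · exact absurd (ha2 ▸ ha) hc2
      · by_cases hb2 : b = f2
        · rw [if_neg ha2, if_pos hb2] at hab
          have : a = f1 :=
            ginj a (by rwa [mem_edgeFinset]) f1 hf1mem hab
          rcases hcase with hc1 | hc2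
          · exact absurd (this ▸ ha) hc1
          · exact absurd (hb2 ▸ hb) hc2
        · rw [if_neg ha2, if_neg hb2] at hab
          exact ginj a (by rwa [mem_edgeFinset]) b (by rwa [mem_edgeFinset]) hab

end Aux

theorem stmt5 {V : Type*} [Fintype V] [Nontrivial V]
    (G : SimpleGraph V) (hG : G.Connected) :
    rc G = Fintype.card V - 1 ↔ G.IsTree := by
  constructor
  · intro h
    by_contra hnt
    obtain ⟨c, hcb, hcr⟩ := nontree_mem hG hnt
    have hle : rc G ≤ Fintype.card V - 2 := Nat.sInf_le ⟨c, hcb, hcr⟩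
    have hn2 : 2 ≤ Fintype.card V := Fintype.one_lt_card
    omega
  · intro h
    exact tree_rc h
end

section
/- For integers s and t with 2 ≤ s ≤ t, the rainbow connection number of the complete bipartite graph K_{s,t} equals min(⌈t^{1/s}⌉, 4). -/
open SimpleGraph

/-! ### Auxiliary path-existence lemmas -/

lemma exists_rainbow_one {V : Type*} {G : SimpleGraph V} (c : Sym2 V → ℕ) {a b : V}
    (h : G.Adj a b) : ∃ p : G.Walk a b, p.IsPath ∧ (p.edges.map c).Nodup :=
  ⟨Walk.cons h Walk.nil, by simp [Walk.isPath_def, h.ne], by simp⟩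

lemma exists_rainbow_two {V : Type*} {G : SimpleGraph V} (c : Sym2 V → ℕ) {a b d : V}
    (h1 : G.Adj a b) (h2 : G.Adj b d) (had : a ≠ d) (hc : c s(a,b) ≠ c s(b,d)) :
    ∃ p : G.Walk a d, p.IsPath ∧ (p.edges.map c).Nodup :=
  ⟨Walk.cons h1 (Walk.cons h2 Walk.nil),
    by simp [Walk.isPath_def, h1.ne, h2.ne, had], by simp [hc]⟩

lemma exists_rainbow_four {V : Type*} {G : SimpleGraph V} (c : Sym2 V → ℕ) {a b d e f : V}
    (h1 : G.Adj a b) (h2 : G.Adj b d) (h3 : G.Adj d e) (h4 : G.Adj e f)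
    (hdist : ([a,b,d,e,f] : List V).Nodup)
    (hcol : ([c s(a,b), c s(b,d), c s(d,e), c s(e,f)] : List ℕ).Nodup) :
    ∃ p : G.Walk a f, p.IsPath ∧ (p.edges.map c).Nodup :=
  ⟨Walk.cons h1 (Walk.cons h2 (Walk.cons h3 (Walk.cons h4 Walk.nil))),
    by simp only [Walk.isPath_def, Walk.support_cons, Walk.support_nil]; simpa using hdist,
    by simpa using hcol⟩

/-! ### Parity in the complete bipartite graph -/

lemma bip_parity {s t : ℕ} {u v : Fin s ⊕ Fin t}
    (p : (completeBipartiteGraph (Fin s) (Fin t)).Walk u v) :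
    Even p.length ↔ (u.isLeft = v.isLeft) := by
  induction p with
  | nil => simp
  | @cons a b d h q ih =>
    rw [Walk.length_cons, Nat.even_add_one, ih]
    cases a <;> cases b <;> cases d <;> first | (simp at h; done) | simp

/-! ### Lower bound -/

lemma lower_aux {s t k : ℕ} (c : Sym2 (Fin s ⊕ Fin t) → ℕ)
    (hcol : ∀ e ∈ (completeBipartiteGraph (Fin s) (Fin t)).edgeSet, c e < k)
    (hr : IsRainbowColoring (completeBipartiteGraph (Fin s) (Fin t)) c) (hk : k ≤ 3) :
    t ≤ k ^ s := by
  have hlt : ∀ (i : Fin s) (v : Fin t), c s(Sum.inl i, Sum.inr v) < k := by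
    intro i v
    exact hcol _ ((completeBipartiteGraph (Fin s) (Fin t)).mem_edgeSet.2 (by simp))
  have hinj : Function.Injective
      (fun v : Fin t => fun i : Fin s => (⟨c s(Sum.inl i, Sum.inr v), hlt i v⟩ : Fin k)) := by
    intro v w hvw
    by_contra hne
    have hcc : ∀ i : Fin s, c s(Sum.inl i, Sum.inr v) = c s(Sum.inl i, Sum.inr w) := by
      intro i
      have := congrFun hvw i
      simpa using this
    obtain ⟨p, hp, hnd⟩ := hr (Sum.inr v) (Sum.inr w)
    have hlen_le : p.length ≤ k := by
      have h2 : ∀ x ∈ p.edges.map c, x < k := by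
        intro x hx
        obtain ⟨e, he, rfl⟩ := List.mem_map.1 hx
        exact hcol e (p.edges_subset_edgeSet he)
      calc p.length = (p.edges.map c).length := by simp
        _ = (p.edges.map c).toFinset.card := (List.toFinset_card_of_nodup hnd).symm
        _ ≤ (Finset.range k).card :=
            Finset.card_le_card (fun x hx => Finset.mem_range.2 (h2 x (List.mem_toFinset.1 hx)))
        _ = k := Finset.card_range k
    have heven : Even p.length := by rw [bip_parity p]; rfl
    have hne' : (Sum.inr v : Fin s ⊕ Fin t) ≠ Sum.inr w := by simpa using hne
    have hlen0 : p.length ≠ 0 := fun h0 => hne' (p.eq_of_length_eq_zero h0)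
    have hlen2 : p.length = 2 := by
      obtain ⟨n, hn⟩ := heven; omega
    cases p with
    | nil => simp at hlen2
    | @cons _ x _ h q =>
      cases q with
      | nil => simp at hlen2
      | @cons _ y _ h' q' =>
        cases q' with
        | cons h'' q'' => simp [Nat.add_assoc] at hlen2
        | nil =>
          cases x with
          | inr x => simp at h
          | inl i =>
            simp only [Walk.edges_cons, Walk.edges_nil, List.map_cons, List.map_nil,
              List.nodup_cons, List.mem_singleton, List.nodup_nil, and_true, List.not_mem_nil,
              not_false_iff] at hnd
            apply hnd
            rw [Sym2.eq_swap]
            exact hcc i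
  have := Fintype.card_le_of_injective _ hinj
  simpa using this

/-! ### Symmetric coloring constructor -/

def bipColor {s t : ℕ} (g : Fin s → Fin t → ℕ) : Sym2 (Fin s ⊕ Fin t) → ℕ :=
  Sym2.lift ⟨fun a b =>
    match a, b with
    | Sum.inl i, Sum.inr v => g i v
    | Sum.inr v, Sum.inl i => g i v
    | _, _ => 0,
    by intro a b; cases a <;> cases b <;> rfl⟩

@[simp] lemma bipColor_lr {s t : ℕ} (g : Fin s → Fin t → ℕ) (i : Fin s) (v : Fin t) :
    bipColor g s(Sum.inl i, Sum.inr v) = g i v := rfl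

@[simp] lemma bipColor_rl {s t : ℕ} (g : Fin s → Fin t → ℕ) (i : Fin s) (v : Fin t) :
    bipColor g s(Sum.inr v, Sum.inl i) = g i v := rfl

lemma bipColor_lt {s t k : ℕ} {g : Fin s → Fin t → ℕ} (h : ∀ i v, g i v < k) :
    ∀ e ∈ (completeBipartiteGraph (Fin s) (Fin t)).edgeSet, bipColor g e < k := by
  intro e he
  induction e using Sym2.ind with
  | _ a b =>
    rw [SimpleGraph.mem_edgeSet] at he
    cases a <;> cases b
    · simp at he
    · exact h _ _
    · exact h _ _
    · simp at he

/-! ### The universal 4-coloring -/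

lemma upper4 {s t : ℕ} (hs : 2 ≤ s) (ht : 2 ≤ t) :
    ∃ c : Sym2 (Fin s ⊕ Fin t) → ℕ,
      (∀ e ∈ (completeBipartiteGraph (Fin s) (Fin t)).edgeSet, c e < 4) ∧
      IsRainbowColoring (completeBipartiteGraph (Fin s) (Fin t)) c := by
  refine ⟨bipColor (fun i v => if v.val = 0 then (if i.val = 0 then 2 else 3)
      else (if i.val = 0 then 0 else 1)), bipColor_lt ?_, ?_⟩
  · intro i v
    split <;> split <;> omega
  · intro u v
    rcases eq_or_ne u v with rfl | huv
    · exact ⟨Walk.nil, by simp, by simp⟩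
    have hi0 : (0:ℕ) < s := by omega
    have hi1 : (1:ℕ) < s := by omega
    have hv0 : (0:ℕ) < t := by omega
    have hv1 : (1:ℕ) < t := by omega
    cases u with
    | inl i =>
      cases v with
      | inr w => exact exists_rainbow_one _ (by simp)
      | inl j =>
        have hij : i ≠ j := fun h => huv (by rw [h])
        by_cases hiz : i.val = 0
        · refine exists_rainbow_two _ (b := Sum.inr ⟨1, hv1⟩) (by simp) (by simp) huv ?_
          have hjz : j.val ≠ 0 := fun h => hij (Fin.ext (by omega))
          simp [hiz, hjz]
        · by_cases hjz : j.val = 0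
          · refine exists_rainbow_two _ (b := Sum.inr ⟨1, hv1⟩) (by simp) (by simp) huv ?_
            simp [hiz, hjz]
          · refine exists_rainbow_four _
              (b := Sum.inr ⟨1, hv1⟩) (d := Sum.inl ⟨0, hi0⟩) (e := Sum.inr ⟨0, hv0⟩)
              (by simp) (by simp) (by simp) (by simp) ?_ ?_
            · simp only [List.nodup_cons, List.mem_cons, List.mem_singleton, List.nodup_nil]
              refine ⟨?_, ?_, ?_, ?_⟩ <;>
                simp [Sum.inl.injEq, Sum.inr.injEq, Fin.ext_iff] <;> omega
            · simp [hiz, hjz]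
    | inr w =>
      cases v with
      | inl j => exact exists_rainbow_one _ (by simp)
      | inr x =>
        have hwx : w ≠ x := fun h => huv (by rw [h])
        by_cases hwz : w.val = 0
        · refine exists_rainbow_two _ (b := Sum.inl ⟨0, hi0⟩) (by simp) (by simp) huv ?_
          have hxz : x.val ≠ 0 := fun h => hwx (Fin.ext (by omega))
          simp [hwz, hxz]
        · by_cases hxz : x.val = 0
          · refine exists_rainbow_two _ (b := Sum.inl ⟨0, hi0⟩) (by simp) (by simp) huv ?_
            simp [hwz, hxz]
          · refine exists_rainbow_four _
              (b := Sum.inl ⟨0, hi0⟩) (d := Sum.inr ⟨0, hv0⟩) (e := Sum.inl ⟨1, hi1⟩)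
              (by simp) (by simp) (by simp) (by simp) ?_ ?_
            · simp only [List.nodup_cons, List.mem_cons, List.mem_singleton, List.nodup_nil]
              refine ⟨?_, ?_, ?_, ?_⟩ <;>
                simp [Sum.inl.injEq, Sum.inr.injEq, Fin.ext_iff] <;> omega
            · simp [hwz, hxz]

/-! ### The m-coloring when t ≤ m ^ s -/

lemma upperM {s t m : ℕ} (hs : 2 ≤ s) (hst : s ≤ t) (hm : 2 ≤ m) (htm : t ≤ m ^ s) :
    ∃ c : Sym2 (Fin s ⊕ Fin t) → ℕ,
      (∀ e ∈ (completeBipartiteGraph (Fin s) (Fin t)).edgeSet, c e < m) ∧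
      IsRainbowColoring (completeBipartiteGraph (Fin s) (Fin t)) c := by
  have hm0 : (0:ℕ) < m := by omega
  have hm1 : (1:ℕ) < m := by omega
  -- the "basis" vectors
  set E : Fin s → (Fin s → Fin m) := fun k i => if i = k then ⟨1, hm1⟩ else ⟨0, hm0⟩ with hEdef
  have hE : Function.Injective E := by
    intro a b hab
    by_contra hne
    have h1 := congrFun hab a
    simp only [hEdef, if_pos rfl, if_neg hne] at h1
    exact absurd (congrArg Fin.val h1) (by norm_num)
  set R : Finset (Fin s → Fin m) := Finset.univ.image E with hRdef
  have hRcard : R.card = s := by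
    rw [hRdef, Finset.card_image_of_injective _ hE, Finset.card_univ, Fintype.card_fin]
  have hcompl : t - s ≤ Rᶜ.card := by
    rw [Finset.card_compl, hRcard]
    have : Fintype.card (Fin s → Fin m) = m ^ s := by simp
    omega
  obtain ⟨f⟩ : Nonempty (Fin (t - s) ↪ {y : Fin s → Fin m // y ∈ Rᶜ}) := by
    apply Function.Embedding.nonempty_of_card_le
    rw [Fintype.card_fin]
    calc t - s ≤ Rᶜ.card := hcompl
      _ = Fintype.card {y : Fin s → Fin m // y ∈ Rᶜ} := (Fintype.card_coe _).symm
  set x : Fin t → (Fin s → Fin m) := fun v =>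
    if hv : v.val < s then E ⟨v.val, hv⟩ else (f ⟨v.val - s, by omega⟩ : _).val with hxdef
  have hxE : ∀ (k : Fin s) (hk : (k : ℕ) < t), x ⟨k.val, hk⟩ = E k := by
    intro k hk
    simp [hxdef, dif_pos k.isLt]
  have hxinj : Function.Injective x := by
    intro a b hab
    simp only [hxdef] at hab
    split_ifs at hab with h1 h2 h2
    · exact Fin.ext (by simpa [Fin.ext_iff] using hE hab)
    · exfalso
      have hmem := (f ⟨b.val - s, by omega⟩).2
      rw [← hab] at hmem
      rw [Finset.mem_compl] at hmem
      exact hmem (Finset.mem_image_of_mem E (Finset.mem_univ _))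
    · exfalso
      have hmem := (f ⟨a.val - s, by omega⟩).2
      rw [hab] at hmem
      rw [Finset.mem_compl] at hmem
      exact hmem (Finset.mem_image_of_mem E (Finset.mem_univ _))
    · have := f.injective (Subtype.ext hab)
      have : a.val - s = b.val - s := by simpa [Fin.ext_iff] using this
      exact Fin.ext (by omega)
  refine ⟨bipColor (fun i v => (x v i).val), bipColor_lt (fun i v => (x v i).isLt), ?_⟩
  intro u v
  rcases eq_or_ne u v with rfl | huv
  · exact ⟨Walk.nil, by simp, by simp⟩
  cases u with
  | inl i =>
    cases v with
    | inr w => exact exists_rainbow_one _ (by simp)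
    | inl j =>
      have hij : i ≠ j := fun h => huv (by rw [h])
      have hit : (i : ℕ) < t := lt_of_lt_of_le i.isLt hst
      refine exists_rainbow_two _ (b := Sum.inr ⟨i.val, hit⟩) (by simp) (by simp) huv ?_
      simp only [bipColor_lr, bipColor_rl]
      rw [hxE i hit]
      simp [hEdef, if_neg (fun h : j = i => hij h.symm)]
  | inr w =>
    cases v with
    | inl j => exact exists_rainbow_one _ (by simp)
    | inr y =>
      have hwy : w ≠ y := fun h => huv (by rw [h])
      have hxne : x w ≠ x y := fun h => hwy (hxinj h)
      obtain ⟨i, hi⟩ := Function.ne_iff.1 hxne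
      refine exists_rainbow_two _ (b := Sum.inl i) (by simp) (by simp) huv ?_
      simp only [bipColor_lr, bipColor_rl]
      exact fun h => hi (Fin.ext h)

/-! ### Main theorem -/

theorem stmt9 (s t : ℕ) (hs : 2 ≤ s) (hst : s ≤ t) :
    rc (completeBipartiteGraph (Fin s) (Fin t)) = min (sInf {m : ℕ | t ≤ m ^ s}) 4 := by
  have ht2 : 2 ≤ t := hs.trans hst
  have hMmem : t ≤ (sInf {m : ℕ | t ≤ m ^ s}) ^ s := by
    have : sInf {m : ℕ | t ≤ m ^ s} ∈ {m : ℕ | t ≤ m ^ s} :=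
      Nat.sInf_mem ⟨t, Nat.le_self_pow (by omega) t⟩
    exact this
  have hM2 : 2 ≤ sInf {m : ℕ | t ≤ m ^ s} := by
    by_contra h
    push_neg at h
    have h1 : (sInf {m : ℕ | t ≤ m ^ s}) ^ s ≤ 1 ^ s :=
      Nat.pow_le_pow_left (by omega) s
    simp at h1
    omega
  obtain ⟨c4, hc4b, hc4r⟩ := upper4 hs ht2
  obtain ⟨cM, hcMb, hcMr⟩ := upperM hs hst hM2 hMmem
  unfold rc
  apply le_antisymm
  · apply Nat.sInf_le
    rcases le_total (sInf {m : ℕ | t ≤ m ^ s}) 4 with h | h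
    · rw [min_eq_left h]; exact ⟨cM, hcMb, hcMr⟩
    · rw [min_eq_right h]; exact ⟨c4, hc4b, hc4r⟩
  · apply le_csInf
    · exact ⟨4, ⟨c4, hc4b, hc4r⟩⟩
    rintro k ⟨c, hb, hrc⟩
    rcases le_or_gt 4 k with h | h
    · exact le_trans (min_le_right _ _) h
    · have h1 : t ≤ k ^ s := lower_aux c hb hrc (by omega)
      have h2 : sInf {m : ℕ | t ≤ m ^ s} ≤ k := Nat.sInf_le h1
      exact le_trans (min_le_left _ _) h2
end

section
/- For integers s, t with 2 ≤ s ≤ t ≤ 2^s, the complete bipartite graph K_{s,t} satisfies rc(K_{s,t}) ≤ 2. -/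
open SimpleGraph

/-- Auxiliary matrix: the color of the edge between `a : Fin s` and `b : Fin t`. -/
def Fcol (s t : ℕ) (a : Fin s) (b : Fin t) : ℕ :=
  if 2 ^ (a : ℕ) < t then (if Nat.testBit b a then 1 else 0)
  else (if (a : ℕ) = (b : ℕ) then 0 else 1)

lemma Fcol_lt_two (s t : ℕ) (a : Fin s) (b : Fin t) : Fcol s t a b < 2 := by
  unfold Fcol; split <;> split <;> omega

/-- distinct rows -/
lemma Fcol_row (s t : ℕ) (ht : t ≤ 2 ^ s) (b b' : Fin t) (hne : b ≠ b') :
    ∃ a : Fin s, Fcol s t a b ≠ Fcol s t a b' := by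
  have hbb : (b : ℕ) ≠ (b' : ℕ) := fun h => hne (Fin.ext h)
  have : ∃ i, Nat.testBit b i ≠ Nat.testBit b' i := by
    by_contra h
    push_neg at h
    exact hbb (Nat.eq_of_testBit_eq h)
  obtain ⟨i, hi⟩ := this
  have h2i : 2 ^ i ≤ (b : ℕ) ∨ 2 ^ i ≤ (b' : ℕ) := by
    by_contra h
    push_neg at h
    rw [Nat.testBit_lt_two_pow h.1, Nat.testBit_lt_two_pow h.2] at hi
    exact hi rfl
  have hit : 2 ^ i < t := by
    rcases h2i with h | h
    · exact lt_of_le_of_lt h b.isLt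
    · exact lt_of_le_of_lt h b'.isLt
  have his : i < s := by
    by_contra h
    push_neg at h
    have : 2 ^ s ≤ 2 ^ i := Nat.pow_le_pow_right (by norm_num) h
    omega
  refine ⟨⟨i, his⟩, ?_⟩
  simp only [Fcol, hit, if_pos]
  intro h
  rcases Bool.eq_false_or_eq_true (Nat.testBit b i) with hb | hb <;>
    rcases Bool.eq_false_or_eq_true (Nat.testBit b' i) with hb' | hb' <;>
    simp [hb, hb'] at h hi

/-- distinct columns -/
lemma Fcol_col (s t : ℕ) (hs : 2 ≤ s) (hst : s ≤ t) (a a' : Fin s) (hne : a ≠ a') :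
    ∃ b : Fin t, Fcol s t a b ≠ Fcol s t a' b := by
  have ht2 : 2 ≤ t := le_trans hs hst
  have haa : (a : ℕ) ≠ (a' : ℕ) := fun h => hne (Fin.ext h)
  by_cases h1 : 2 ^ (a : ℕ) < t
  · by_cases h2 : 2 ^ (a' : ℕ) < t
    · -- both bit columns; use b = 2^a
      refine ⟨⟨2 ^ (a : ℕ), h1⟩, ?_⟩
      simp only [Fcol, h1, h2, if_pos]
      rw [Nat.testBit_two_pow_self, Nat.testBit_two_pow_of_ne haa]
      simp
    · -- a' is complement-indicator; a' ≠ 0, use b = 0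
      have ha'0 : (a' : ℕ) ≠ 0 := by
        intro h; rw [h] at h2; omega
      refine ⟨⟨0, by omega⟩, ?_⟩
      simp [Fcol, h1, h2, Nat.zero_testBit, ha'0]
  · by_cases h2 : 2 ^ (a' : ℕ) < t
    · have ha0 : (a : ℕ) ≠ 0 := by
        intro h; rw [h] at h1; omega
      refine ⟨⟨0, by omega⟩, ?_⟩
      simp [Fcol, h1, h2, Nat.zero_testBit, ha0]
    · -- both complement-indicator; use b = a
      refine ⟨⟨(a : ℕ), lt_of_lt_of_le a.isLt hst⟩, ?_⟩
      simp only [Fcol, h1, h2, if_neg]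
      simp [Ne.symm, haa]

theorem stmt10 (s t : ℕ) (hs : 2 ≤ s) (hst : s ≤ t) (ht : t ≤ 2 ^ s) :
    rc (completeBipartiteGraph (Fin s) (Fin t)) ≤ 2 := by
  set G := completeBipartiteGraph (Fin s) (Fin t) with hG
  have key : 2 ∈ {k | ∃ c : Sym2 (Fin s ⊕ Fin t) → ℕ,
      (∀ e ∈ G.edgeSet, c e < k) ∧ IsRainbowColoring G c} := by
    refine ⟨Sym2.lift ⟨fun x y =>
      match x, y with
      | Sum.inl a, Sum.inr b => Fcol s t a b
      | Sum.inr b, Sum.inl a => Fcol s t a b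
      | _, _ => 0, by
        rintro (a | b) (a' | b') <;> rfl⟩, ?_, ?_⟩
    · rintro e _
      induction e using Sym2.ind with
      | _ x y =>
        rcases x with a | b <;> rcases y with a' | b' <;>
          simp only [Sym2.lift_mk] <;>
          first
          | exact two_pos
          | exact Fcol_lt_two s t _ _
    · rintro (a | b) (a' | b')
      · -- inl a, inl a'
        by_cases hne : a = a'
        · subst hne
          exact ⟨Walk.nil, Walk.IsPath.nil, by simp⟩
        · obtain ⟨b, hb⟩ := Fcol_col s t hs hst a a' hne
          have h1 : G.Adj (Sum.inl a) (Sum.inr b) := by simp [hG]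
          have h2 : G.Adj (Sum.inr b) (Sum.inl a') := by simp [hG]
          refine ⟨Walk.cons h1 (Walk.cons h2 Walk.nil), ?_, ?_⟩
          · simp [Walk.isPath_def, hne]
          · simp [hb]
      · -- inl a, inr b'
        have h1 : G.Adj (Sum.inl a) (Sum.inr b') := by simp [hG]
        exact ⟨Walk.cons h1 Walk.nil, by simp [Walk.isPath_def], by simp⟩
      · have h1 : G.Adj (Sum.inr b) (Sum.inl a') := by simp [hG]
        exact ⟨Walk.cons h1 Walk.nil, by simp [Walk.isPath_def], by simp⟩
      · -- inr b, inr b'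
        by_cases hne : b = b'
        · subst hne
          exact ⟨Walk.nil, Walk.IsPath.nil, by simp⟩
        · obtain ⟨a, ha⟩ := Fcol_row s t ht b b' hne
          have h1 : G.Adj (Sum.inr b) (Sum.inl a) := by simp [hG]
          have h2 : G.Adj (Sum.inl a) (Sum.inr b') := by simp [hG]
          refine ⟨Walk.cons h1 (Walk.cons h2 Walk.nil), ?_, ?_⟩
          · simp [Walk.isPath_def, hne]
          · simp [ha]
  exact Nat.sInf_le key
end
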